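/- arXiv:2303.04033 — 2 statements merged into one kernel-verified Lean document; each statement's English description precedes it below -/
import Mathlib

section
/- Let K be a field, f(X,Y) = Σ_{i=0}^n a_i(X)Y^i ∈ K[X,Y] with a₀, a_n ≠ 0, a₀ ∈ K (constant), and deg a_{n−1} ≥ deg a_n ≥ max{deg a₀, …, deg a_{n−2}}. If f(X, g(X)) = h(X)^k for g, h ∈ K[X] with deg g > deg a_{n−1} − deg a_n, h irreducible over K and k a positive integer, then f(X,Y), viewed as a polynomial in Y over K(X), is a product of at most k irreducible factors over K(X). -/
open Polynomial

noncomputable section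

namespace Stmt18Aux

variable {K : Type*} [Field K]

/-- Tropical weight: `max_i (deg_X (coeff i) + i * d)`. -/
def wdeg (d : ℕ) (P : Polynomial (Polynomial K)) : ℕ :=
  P.support.sup fun i => (P.coeff i).natDegree + i * d

theorem le_wdeg {d : ℕ} {P : Polynomial (Polynomial K)} {i : ℕ} (hi : P.coeff i ≠ 0) :
    (P.coeff i).natDegree + i * d ≤ wdeg d P :=
  Finset.le_sup (f := fun i => (P.coeff i).natDegree + i * d)
    (Polynomial.mem_support_iff.mpr hi)

theorem wdeg_C {d : ℕ} {r : Polynomial K} (hr : r ≠ 0) :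
    wdeg d (Polynomial.C r) = r.natDegree := by
  rw [wdeg, Polynomial.support_C hr]
  simp

theorem wdeg_one (d : ℕ) : wdeg d (1 : Polynomial (Polynomial K)) = 0 := by
  rw [← Polynomial.C_1, wdeg_C one_ne_zero, Polynomial.natDegree_one]

theorem natDegree_eval_le (d : ℕ) (P : Polynomial (Polynomial K)) {g : Polynomial K}
    (hgd : g.natDegree = d) : (P.eval g).natDegree ≤ wdeg d P := by
  rw [Polynomial.eval_eq_sum, Polynomial.sum_def]
  apply Polynomial.natDegree_sum_le_of_forall_le
  intro i hi
  refine le_trans (Polynomial.natDegree_mul_le)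
    (le_trans ?_ (le_wdeg (Polynomial.mem_support_iff.mp hi)))
  have := Polynomial.natDegree_pow_le (p := g) (n := i)
  rw [hgd] at this
  omega

theorem add_wdeg_le_wdeg_mul (d : ℕ) {P Q : Polynomial (Polynomial K)} (hP : P ≠ 0) (hQ : Q ≠ 0) :
    wdeg d P + wdeg d Q ≤ wdeg d (P * Q) := by
  classical
  have hPs : P.support.Nonempty := Polynomial.nonempty_support_iff.mpr hP
  have hQs : Q.support.Nonempty := Polynomial.nonempty_support_iff.mpr hQ
  set SP := P.support.filter (fun i => (P.coeff i).natDegree + i * d = wdeg d P) with hSPdef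
  set SQ := Q.support.filter (fun i => (Q.coeff i).natDegree + i * d = wdeg d Q) with hSQdef
  have hSPne : SP.Nonempty := by
    obtain ⟨i, hi, he⟩ := Finset.exists_mem_eq_sup _ hPs
      (fun i => (P.coeff i).natDegree + i * d)
    exact ⟨i, Finset.mem_filter.mpr ⟨hi, he.symm⟩⟩
  have hSQne : SQ.Nonempty := by
    obtain ⟨i, hi, he⟩ := Finset.exists_mem_eq_sup _ hQs
      (fun i => (Q.coeff i).natDegree + i * d)
    exact ⟨i, Finset.mem_filter.mpr ⟨hi, he.symm⟩⟩
  set i0 := SP.max' hSPne with hi0def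
  set j0 := SQ.max' hSQne with hj0def
  have hi0 : i0 ∈ SP := SP.max'_mem hSPne
  have hj0 : j0 ∈ SQ := SQ.max'_mem hSQne
  rw [hSPdef, Finset.mem_filter, Polynomial.mem_support_iff] at hi0
  rw [hSQdef, Finset.mem_filter, Polynomial.mem_support_iff] at hj0
  set dP := (P.coeff i0).natDegree with hdPdef
  set dQ := (Q.coeff j0).natDegree with hdQdef
  have hstrictP : ∀ i, i0 < i → P.coeff i ≠ 0 →
      (P.coeff i).natDegree + i * d < wdeg d P := by
    intro i hlt hne
    refine lt_of_le_of_ne (le_wdeg hne) fun he => ?_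
    exact absurd (SP.le_max' i (Finset.mem_filter.mpr ⟨Polynomial.mem_support_iff.mpr hne, he⟩))
      (not_le.mpr hlt)
  have hstrictQ : ∀ j, j0 < j → Q.coeff j ≠ 0 →
      (Q.coeff j).natDegree + j * d < wdeg d Q := by
    intro j hlt hne
    refine lt_of_le_of_ne (le_wdeg hne) fun he => ?_
    exact absurd (SQ.le_max' j (Finset.mem_filter.mpr ⟨Polynomial.mem_support_iff.mpr hne, he⟩))
      (not_le.mpr hlt)
  have key : ((P * Q).coeff (i0 + j0)).coeff (dP + dQ) =
      (P.coeff i0).leadingCoeff * (Q.coeff j0).leadingCoeff := by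
    rw [Polynomial.coeff_mul, Polynomial.finset_sum_coeff]
    rw [Finset.sum_eq_single (i0, j0)]
    · exact Polynomial.coeff_mul_degree_add_degree _ _
    · rintro ⟨i, j⟩ hij hne
      rw [Finset.HasAntidiagonal.mem_antidiagonal] at hij
      by_cases hai : P.coeff i = 0
      · simp [hai]
      by_cases hbj : Q.coeff j = 0
      · simp [hbj]
      have hcase : i0 < i ∨ j0 < j := by
        by_contra hc
        push_neg at hc
        have hieq : i = i0 ∧ j = j0 := by omega
        exact hne (by rw [hieq.1, hieq.2])
      have hmul : i * d + j * d = i0 * d + j0 * d := by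
        rw [← add_mul, ← add_mul, hij]
      have hlt : (P.coeff i).natDegree + (Q.coeff j).natDegree < dP + dQ := by
        rcases hcase with hc | hc
        · have h1 := hstrictP i hc hai
          have h2 := le_wdeg (d := d) hbj
          have e1 : dP + i0 * d = wdeg d P := hi0.2
          have e2 : dQ + j0 * d = wdeg d Q := hj0.2
          linarith
        · have h1 := hstrictQ j hc hbj
          have h2 := le_wdeg (d := d) hai
          have e1 : dP + i0 * d = wdeg d P := hi0.2
          have e2 : dQ + j0 * d = wdeg d Q := hj0.2
          linarith
      exact Polynomial.coeff_eq_zero_of_natDegree_lt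
        (lt_of_le_of_lt Polynomial.natDegree_mul_le hlt)
    · intro habs
      exact absurd (Finset.HasAntidiagonal.mem_antidiagonal.mpr (rfl : i0 + j0 = i0 + j0)) habs
  have hcoeffne : (P * Q).coeff (i0 + j0) ≠ 0 := by
    intro h0
    rw [h0, Polynomial.coeff_zero] at key
    exact mul_ne_zero (Polynomial.leadingCoeff_ne_zero.mpr hi0.1)
      (Polynomial.leadingCoeff_ne_zero.mpr hj0.1) key.symm
  have hdeg : dP + dQ ≤ ((P * Q).coeff (i0 + j0)).natDegree := by
    apply Polynomial.le_natDegree_of_ne_zero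
    rw [key]
    exact mul_ne_zero (Polynomial.leadingCoeff_ne_zero.mpr hi0.1)
      (Polynomial.leadingCoeff_ne_zero.mpr hj0.1)
  have hfin := le_wdeg (d := d) hcoeffne
  have e1 : dP + i0 * d = wdeg d P := hi0.2
  have e2 : dQ + j0 * d = wdeg d Q := hj0.2
  have hmul : (i0 + j0) * d = i0 * d + j0 * d := add_mul _ _ _
  linarith

theorem sum_wdeg_le_wdeg_prod (d : ℕ) {ι : Type*} (s : Finset ι)
    (F : ι → Polynomial (Polynomial K)) (hF : ∀ i ∈ s, F i ≠ 0) :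
    ∑ i ∈ s, wdeg d (F i) ≤ wdeg d (∏ i ∈ s, F i) := by
  classical
  induction s using Finset.cons_induction with
  | empty => simp [wdeg_one]
  | cons a s ha ih =>
    rw [Finset.prod_cons, Finset.sum_cons]
    have hprod : ∏ i ∈ s, F i ≠ 0 :=
      Finset.prod_ne_zero_iff.mpr fun i hi => hF i (Finset.mem_cons_of_mem hi)
    calc wdeg d (F a) + ∑ i ∈ s, wdeg d (F i)
        ≤ wdeg d (F a) + wdeg d (∏ i ∈ s, F i) := by
          have := ih fun i hi => hF i (Finset.mem_cons_of_mem hi)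
          omega
      _ ≤ wdeg d (F a * ∏ i ∈ s, F i) :=
          add_wdeg_le_wdeg_mul d (hF a (Finset.mem_cons_self a s)) hprod

end Stmt18Aux

open Stmt18Aux

/-- `f ∈ K[X][Y]` is a product of at most `k` nonconstant (in `Y`) irreducible
factors over `K(X)`: it cannot be written as a product of `k + 1` polynomials
of positive degree in `K(X)[Y]`. -/
def FactorsAtMostBiv {K : Type*} [Field K] (f : Polynomial (Polynomial K)) (k : ℕ) : Prop :=
  ∀ g : Fin (k + 1) → Polynomial (RatFunc K), (∀ i, 0 < (g i).natDegree) →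
    f.map (algebraMap (Polynomial K) (RatFunc K)) ≠ ∏ i, g i

theorem stmt18 {K : Type*} [Field K] (f : Polynomial (Polynomial K))
    (hn : 0 < f.natDegree)
    (ha0 : f.coeff 0 ≠ 0) (ha0const : (f.coeff 0).natDegree = 0)
    (han : f.coeff f.natDegree ≠ 0)
    (hdeg1 : (f.coeff f.natDegree).natDegree ≤ (f.coeff (f.natDegree - 1)).natDegree)
    (hdeg2 : ∀ i, i + 2 ≤ f.natDegree →
      (f.coeff i).natDegree ≤ (f.coeff f.natDegree).natDegree)
    (g h : Polynomial K) (hh : Irreducible h) (k : ℕ) (hk : 0 < k)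
    (heval : f.eval g = h ^ k)
    (hg : g.natDegree >
      (f.coeff (f.natDegree - 1)).natDegree - (f.coeff f.natDegree).natDegree) :
    FactorsAtMostBiv f k := by
  classical
  intro G hGpos hEq
  have hφinj : Function.Injective (algebraMap (Polynomial K) (RatFunc K)) :=
    IsFractionRing.injective _ _
  have hd : 0 < g.natDegree := lt_of_le_of_lt (Nat.zero_le _) hg
  have hf0 : f ≠ 0 := fun h0 => han (by simp [h0])
  have hg0 : g ≠ 0 := fun h0 => by rw [h0, Polynomial.natDegree_zero] at hd; omega
  -- strict dominance of the top term
  have hstrict : ∀ i, i < f.natDegree → (f.coeff i).natDegree + i * g.natDegree <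
      (f.coeff f.natDegree).natDegree + f.natDegree * g.natDegree := by
    intro i hi
    by_cases hi2 : i + 2 ≤ f.natDegree
    · have h1 := hdeg2 i hi2
      have h2 : (i + 1) * g.natDegree ≤ f.natDegree * g.natDegree :=
        Nat.mul_le_mul_right _ (by omega)
      have h3 : (i + 1) * g.natDegree = i * g.natDegree + g.natDegree := by ring
      linarith
    · have hieq : f.natDegree - 1 = i := by omega
      rw [hieq] at hdeg1 hg
      have h1 : (f.coeff i).natDegree < (f.coeff f.natDegree).natDegree + g.natDegree := by
        omega
      have h2 : f.natDegree * g.natDegree = i * g.natDegree + g.natDegree := by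
        have : i + 1 = f.natDegree := by omega
        rw [← this]; ring
      linarith
  have hwf : wdeg g.natDegree f
      = (f.coeff f.natDegree).natDegree + f.natDegree * g.natDegree := by
    apply le_antisymm
    · apply Finset.sup_le
      intro i hi
      rcases lt_or_eq_of_le (Polynomial.le_natDegree_of_mem_supp i hi) with hlt | heq2
      · exact (hstrict i hlt).le
      · rw [heq2]
    · exact le_wdeg han
  have hevaldeg : (f.eval g).natDegree
      = (f.coeff f.natDegree).natDegree + f.natDegree * g.natDegree := by
    have hA1 : 1 ≤ (f.coeff f.natDegree).natDegree + f.natDegree * g.natDegree := by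
      have : 1 * 1 ≤ f.natDegree * g.natDegree := Nat.mul_le_mul hn hd
      omega
    obtain ⟨B, hB⟩ : ∃ B, (f.coeff f.natDegree).natDegree + f.natDegree * g.natDegree = B + 1 :=
      ⟨(f.coeff f.natDegree).natDegree + f.natDegree * g.natDegree - 1, by omega⟩
    rw [Polynomial.eval_eq_sum_range, Finset.sum_range_succ]
    have hT : (∑ i ∈ Finset.range f.natDegree, f.coeff i * g ^ i).natDegree ≤ B := by
      apply Polynomial.natDegree_sum_le_of_forall_le
      intro i hi
      rw [Finset.mem_range] at hi
      have h1 := hstrict i hi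
      have h2 : (f.coeff i * g ^ i).natDegree ≤ (f.coeff i).natDegree + i * g.natDegree := by
        refine le_trans Polynomial.natDegree_mul_le ?_
        have := Polynomial.natDegree_pow_le (p := g) (n := i)
        linarith
      linarith
    have hlead : (f.coeff f.natDegree * g ^ f.natDegree).natDegree
        = (f.coeff f.natDegree).natDegree + f.natDegree * g.natDegree := by
      rw [Polynomial.natDegree_mul han (pow_ne_zero _ hg0), Polynomial.natDegree_pow]
    rw [Polynomial.natDegree_add_eq_right_of_natDegree_lt, hlead]
    rw [hlead]
    omega
  -- Gauss normalization of the factors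
  have hGne : ∀ i, G i ≠ 0 := fun i h0 => by simpa [h0] using hGpos i
  set M := nonZeroDivisors (Polynomial K) with hMdef
  set N : Fin (k + 1) → Polynomial (Polynomial K) :=
    fun i => IsLocalization.integerNormalization M (G i) with hNdef
  have hbex : ∀ i : Fin (k + 1), ∃ b : M,
      (N i).map (algebraMap (Polynomial K) (RatFunc K))
        = Polynomial.C ((algebraMap (Polynomial K) (RatFunc K)) (b : Polynomial K)) * G i := by
    intro i
    obtain ⟨b, hb⟩ := IsLocalization.integerNormalization_map_to_map M (G i)
    refine ⟨b, ?_⟩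
    rw [hb, ← algebraMap_smul (RatFunc K) (b : Polynomial K) (G i), Polynomial.smul_eq_C_mul]
  choose b hb using hbex
  have hbne : ∀ i, (algebraMap (Polynomial K) (RatFunc K)) (b i : Polynomial K) ≠ 0 := by
    intro i
    have h1 : (b i : Polynomial K) ≠ 0 := nonZeroDivisors.coe_ne_zero _
    exact fun h0 => h1 (hφinj (by rw [h0, map_zero]))
  have hNne : ∀ i, N i ≠ 0 := by
    intro i h0
    have h1 := hb i
    rw [h0, Polynomial.map_zero] at h1
    have hC : Polynomial.C ((algebraMap (Polynomial K) (RatFunc K)) (b i : Polynomial K))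
        ≠ (0 : Polynomial (RatFunc K)) := by
      simpa using hbne i
    exact hGne i ((mul_eq_zero.mp h1.symm).resolve_left hC)
  set P : Fin (k + 1) → Polynomial (Polynomial K) := fun i => (N i).primPart with hPdef
  have hPprim : ∀ i, (P i).IsPrimitive := fun i => (N i).isPrimitive_primPart
  have hPne : ∀ i, P i ≠ 0 := fun i => (N i).primPart_ne_zero
  set Pp := ∏ i, P i with hPpdef
  have hPpne : Pp ≠ 0 := Finset.prod_ne_zero_iff.mpr fun i _ => hPne i
  have hBne : (∏ i, (b i : Polynomial K)) ≠ 0 :=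
    Finset.prod_ne_zero_iff.mpr fun i _ h0 => hbne i (by rw [h0, map_zero])
  have hprodN : ∏ i, N i = Polynomial.C (∏ i, (b i : Polynomial K)) * f := by
    apply Polynomial.map_injective _ hφinj
    rw [Polynomial.map_mul, Polynomial.map_C]
    have e1 : (∏ i, N i).map (algebraMap (Polynomial K) (RatFunc K))
        = ∏ i, (N i).map (algebraMap (Polynomial K) (RatFunc K)) := by
      simp only [← Polynomial.coe_mapRingHom, map_prod]
    rw [e1]
    calc ∏ i, (N i).map (algebraMap (Polynomial K) (RatFunc K))
        = ∏ i, (Polynomial.C ((algebraMap (Polynomial K) (RatFunc K)) (b i : Polynomial K)) * G i) :=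
          Finset.prod_congr rfl fun i _ => hb i
      _ = Polynomial.C ((algebraMap (Polynomial K) (RatFunc K)) (∏ i, (b i : Polynomial K)))
            * ∏ i, G i := by
          rw [Finset.prod_mul_distrib, map_prod, map_prod]
      _ = Polynomial.C ((algebraMap (Polynomial K) (RatFunc K)) (∏ i, (b i : Polynomial K)))
            * f.map (algebraMap (Polynomial K) (RatFunc K)) := by rw [hEq]
  have hprodP : ∏ i, N i = Polynomial.C (∏ i, (N i).content) * Pp := by
    calc ∏ i, N i = ∏ i, (Polynomial.C ((N i).content) * P i) :=
          Finset.prod_congr rfl fun i _ => (N i).eq_C_content_mul_primPart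
      _ = _ := by rw [Finset.prod_mul_distrib, map_prod]
  have hPpprim : Pp.IsPrimitive := by
    rw [Polynomial.isPrimitive_iff_content_eq_one, hPpdef]
    have haux : ∀ s : Finset (Fin (k + 1)), (∏ i ∈ s, P i).content = 1 := by
      intro s
      induction s using Finset.cons_induction with
      | empty => simp
      | cons a s ha ih =>
        rw [Finset.prod_cons, Polynomial.content_mul, ih, mul_one]
        exact (hPprim a).content_eq_one
    exact haux Finset.univ
  have hcontent_f : f.content ≠ 0 := fun h0 => hf0 (Polynomial.content_eq_zero_iff.mp h0)
  have hmain : Polynomial.C (∏ i, (N i).content) * Pp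
      = Polynomial.C (∏ i, (b i : Polynomial K)) * f := by
    rw [← hprodP, hprodN]
  have hcontents : normalize (∏ i, (N i).content)
      = normalize ((∏ i, (b i : Polynomial K)) * f.content) := by
    have h1 := congrArg Polynomial.content hmain
    rw [Polynomial.content_C_mul, Polynomial.content_C_mul, hPpprim.content_eq_one, mul_one] at h1
    rw [h1, normalize_mul, Polynomial.normalize_content]
  obtain ⟨u, hu⟩ : Associated (∏ i, (N i).content) ((∏ i, (b i : Polynomial K)) * f.content) := by
    have h2 := normalize_eq_normalize_iff.mp hcontents
    exact associated_of_dvd_dvd h2.1 h2.2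
  set r : Polynomial K := f.content * ((u⁻¹ : (Polynomial K)ˣ) : Polynomial K) with hrdef
  have hr0 : r ≠ 0 := mul_ne_zero hcontent_f (Units.ne_zero _)
  have hfr : f = Polynomial.C r * Pp := by
    have hCB : (Polynomial.C (∏ i, (b i : Polynomial K)) : Polynomial (Polynomial K)) ≠ 0 :=
      Polynomial.C_ne_zero.mpr hBne
    apply mul_left_cancel₀ hCB
    have hC0 : (∏ i, (N i).content) = (∏ i, (b i : Polynomial K)) * r := by
      have h2 := congrArg (· * ((u⁻¹ : (Polynomial K)ˣ) : Polynomial K)) hu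
      simp only [mul_assoc, Units.mul_inv, mul_one] at h2
      rw [hrdef]
      exact h2
    rw [← hmain, hC0, map_mul, mul_assoc]
  have hPdegpos : ∀ i, 0 < (P i).natDegree := by
    intro i
    have h1 : (N i).natDegree = (G i).natDegree := by
      rw [← Polynomial.natDegree_map_eq_of_injective hφinj (N i), hb i,
        Polynomial.natDegree_C_mul (hbne i)]
    have h2 : (P i).natDegree = (N i).natDegree := (N i).natDegree_primPart
    rw [h2, h1]
    exact hGpos i
  -- evaluation
  have hhk : (h : Polynomial K) ^ k ≠ 0 := pow_ne_zero _ hh.ne_zero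
  have hEval : r * ∏ i, (P i).eval g = h ^ k := by
    rw [← heval]
    conv_rhs => rw [hfr]
    rw [Polynomial.eval_mul, Polynomial.eval_C, hPpdef, Polynomial.eval_prod]
  have hAne : ∀ i, (P i).eval g ≠ 0 := by
    intro i h0
    apply hhk
    rw [← hEval, Finset.prod_eq_zero (Finset.mem_univ i) h0, mul_zero]
  have hdegsum : (h ^ k).natDegree = r.natDegree + ∑ i, ((P i).eval g).natDegree := by
    rw [← hEval, Polynomial.natDegree_mul hr0
      (Finset.prod_ne_zero_iff.mpr fun i _ => hAne i),
      Polynomial.natDegree_prod _ _ fun i _ => hAne i]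
  have hwsum : r.natDegree + ∑ i, wdeg g.natDegree (P i) ≤ wdeg g.natDegree f := by
    rw [hfr]
    calc r.natDegree + ∑ i, wdeg g.natDegree (P i)
        ≤ wdeg g.natDegree (Polynomial.C r) + wdeg g.natDegree Pp := by
          have h1 := sum_wdeg_le_wdeg_prod g.natDegree Finset.univ P fun i _ => hPne i
          rw [wdeg_C hr0, hPpdef]
          omega
      _ ≤ wdeg g.natDegree (Polynomial.C r * Pp) :=
          add_wdeg_le_wdeg_mul _ (by simpa using hr0) hPpne
  have hfeval : (f.eval g).natDegree = (h ^ k).natDegree := by rw [heval]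
  have hup : ∀ i, ((P i).eval g).natDegree ≤ wdeg g.natDegree (P i) :=
    fun i => natDegree_eval_le _ _ rfl
  have hsumle : ∑ i, wdeg g.natDegree (P i) ≤ ∑ i, ((P i).eval g).natDegree := by
    have e1 : (f.eval g).natDegree = wdeg g.natDegree f := by rw [hevaldeg, hwf]
    omega
  have hkey : ∀ i, 0 < ((P i).eval g).natDegree := by
    intro i0
    by_contra hc
    push_neg at hc
    have h1 : g.natDegree ≤ wdeg g.natDegree (P i0) := by
      have hm := le_wdeg (d := g.natDegree) (P := P i0) (i := (P i0).natDegree)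
        (Polynomial.mem_support_iff.mp
          (Polynomial.natDegree_mem_support_of_nonzero (hPne i0)))
      have h2 : 1 * g.natDegree ≤ (P i0).natDegree * g.natDegree :=
        Nat.mul_le_mul_right _ (hPdegpos i0)
      have h3 : 1 * g.natDegree = g.natDegree := one_mul _
      linarith
    have hlt : ∑ i, ((P i).eval g).natDegree < ∑ i, wdeg g.natDegree (P i) :=
      Finset.sum_lt_sum (fun i _ => hup i) ⟨i0, Finset.mem_univ _, by omega⟩
    omega
  have hprodvd : (∏ i, (P i).eval g) ∣ h ^ k := ⟨r, by rw [← hEval]; ring⟩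
  have hdvd : ∀ i, h ∣ (P i).eval g := by
    intro i
    have hd1 : (P i).eval g ∣ h ^ k :=
      dvd_trans (Finset.dvd_prod_of_mem (fun j => (P j).eval g) (Finset.mem_univ i)) hprodvd
    obtain ⟨p, hp, hpd⟩ := WfDvdMonoid.exists_irreducible_factor
      (Polynomial.not_isUnit_of_natDegree_pos _ (hkey i)) (hAne i)
    have hph : p ∣ h :=
      (UniqueFactorizationMonoid.irreducible_iff_prime.mp hp).dvd_of_dvd_pow (hpd.trans hd1)
    exact (hp.associated_of_dvd hh hph).symm.dvd.trans hpd
  have hfinal : h ^ (k + 1) ∣ h ^ k := by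
    have h1 : (∏ _i : Fin (k + 1), h) ∣ ∏ i, (P i).eval g :=
      Finset.prod_dvd_prod_of_dvd _ _ fun i _ => hdvd i
    rw [Finset.prod_const, Finset.card_univ, Fintype.card_fin] at h1
    exact h1.trans hprodvd
  have := (pow_dvd_pow_iff hh.ne_zero hh.not_isUnit).mp hfinal
  omega
end
end

section
/- Let K be a field and let f(X,Y) ∈ K[X,Y] factor as f = g·h with g, h ∈ K[X,Y], and let a(X) ∈ K[X] with f(X, a(X)) ≠ 0. Then gcd(g(X,a(X)), f(X,a(X))/g(X,a(X))) divides gcd(f(X,a(X)), (∂f/∂Y)(X,a(X))) in K[X]; i.e., g(X,a(X)) is an admissible divisor of f(X,a(X)). -/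
open Polynomial

noncomputable section

theorem stmt19 {K : Type*} [Field K] [DecidableEq K] (f g h : Polynomial (Polynomial K))
    (a : Polynomial K) (hf : f = g * h) (ha : f.eval a ≠ 0) :
    EuclideanDomain.gcd (g.eval a) (f.eval a / g.eval a) ∣
      EuclideanDomain.gcd (f.eval a) (f.derivative.eval a) := by
  subst hf
  have hfa : (g * h).eval a = g.eval a * h.eval a := by simp
  have hg : g.eval a ≠ 0 := fun h0 => ha (by simp [hfa, h0])
  have hdiv : (g * h).eval a / g.eval a = h.eval a := by
    rw [hfa, mul_comm]; exact mul_div_cancel_right₀ _ hg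
  rw [hdiv]
  apply EuclideanDomain.dvd_gcd
  · rw [hfa]
    exact dvd_mul_of_dvd_left (EuclideanDomain.gcd_dvd_left _ _) _
  · rw [derivative_mul, eval_add, eval_mul, eval_mul]
    exact dvd_add (Dvd.dvd.mul_left (EuclideanDomain.gcd_dvd_right _ _) _)
      (Dvd.dvd.mul_right (EuclideanDomain.gcd_dvd_left _ _) _)
end
end
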